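/- Fix an integer m ≥ 2, reals h > 0, ε > 0, η ≥ 0, A ≥ 1, and s ≥ 0. Regard periodic grid functions as elements of the real inner product space EuclideanSpace ℝ ((ZMod m) × (ZMod m)) with inner product ⟪u, v⟫ = Σ_{(i,j)} u(i,j) v(i,j). Define F_{c,h} and F_{e,h} as follows: F_{c,h}(φ) = h² Σ_{(i,j)} [ (ε⁻²/2) φ(i,j)⁶ + ((ε⁻² + η)/2) φ(i,j)² + (ε²/2) (Δ_h φ)(i,j)² ] + H_h(φ) and F_{e,h}(φ) = h² Σ_{(i,j)} (ε⁻² + η/4 + A) φ(i,j)⁴ + (1 + ηε²/2) h² Σ_{(i,j)} ((𝔇ₓφ)(i,j)² + (𝔇_yφ)(i,j)²) + A h² Σ_{(i,j)} ((𝔇ₓφ)(i,j)² + (𝔇_yφ)(i,j)²)². Let g_c, g_e be maps on grid functions such that for every φ, F_{c,h} has gradient g_c(φ) at φ and F_{e,h} has gradient g_e(φ) at φ (gradients with respect to the inner product ⟪·,·⟫). If grid functions φ and φ' satisfy φ' − φ = s • Δ_h(g_c(φ') − g_e(φ)), then F_{c,h}(φ') − F_{e,h}(φ') ≤ F_{c,h}(φ)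 − F_{e,h}(φ). -/

import Mathlib

/-- The standard discrete Laplacian on periodic grid functions. -/
noncomputable def discreteLaplacian (m : ℕ) [NeZero m] (h : ℝ)
    (u : ZMod m × ZMod m → ℝ) : ZMod m × ZMod m → ℝ :=
  fun p =>
    (u (p.1 + 1, p.2) + u (p.1 - 1, p.2) + u (p.1, p.2 + 1) + u (p.1, p.2 - 1)
      - 4 * u p) / h ^ 2

/-- Center-to-vertex difference in the x direction. -/
noncomputable def Dx (m : ℕ) [NeZero m] (h : ℝ)
    (u : ZMod m × ZMod m → ℝ) : ZMod m × ZMod m → ℝ :=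
  fun p => (u (p.1 + 1, p.2 + 1) - u (p.1, p.2 + 1) + u (p.1 + 1, p.2) - u p) / (2 * h)

/-- Center-to-vertex difference in the y direction. -/
noncomputable def Dy (m : ℕ) [NeZero m] (h : ℝ)
    (u : ZMod m × ZMod m → ℝ) : ZMod m × ZMod m → ℝ :=
  fun p => (u (p.1 + 1, p.2 + 1) - u (p.1 + 1, p.2) + u (p.1, p.2 + 1) - u p) / (2 * h)

/-- Vertex-to-center average. -/
noncomputable def Av (m : ℕ) [NeZero m]
    (ν : ZMod m × ZMod m → ℝ) : ZMod m × ZMod m → ℝ :=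
  fun p => (ν p + ν (p.1 - 1, p.2) + ν (p.1, p.2 - 1) + ν (p.1 - 1, p.2 - 1)) / 4

/-- The discrete energy `H_h`, on grid functions regarded as elements of
`EuclideanSpace ℝ ((ZMod m) × (ZMod m))`. -/
noncomputable def Hh (m : ℕ) [NeZero m] (h A : ℝ)
    (φ : EuclideanSpace ℝ (ZMod m × ZMod m)) : ℝ :=
  A * h ^ 2 * ∑ p : ZMod m × ZMod m, φ p ^ 4 +
    A * h ^ 2 * ∑ p : ZMod m × ZMod m, (Dx m h φ p ^ 2 + Dy m h φ p ^ 2) ^ 2 +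
    3 * h ^ 2 * ∑ p : ZMod m × ZMod m,
      φ p ^ 2 * Av m (fun q => Dx m h φ q ^ 2 + Dy m h φ q ^ 2) p

/-- The convex part `F_{c,h}` of the discrete FCH energy. -/
noncomputable def Fch (m : ℕ) [NeZero m] (h ε η A : ℝ)
    (φ : EuclideanSpace ℝ (ZMod m × ZMod m)) : ℝ :=
  h ^ 2 * ∑ p : ZMod m × ZMod m,
      ((ε ^ 2)⁻¹ / 2 * φ p ^ 6 + ((ε ^ 2)⁻¹ + η) / 2 * φ p ^ 2 +
        ε ^ 2 / 2 * discreteLaplacian m h φ p ^ 2) +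
    Hh m h A φ

/-- The concave part `F_{e,h}` of the discrete FCH energy. -/
noncomputable def Feh (m : ℕ) [NeZero m] (h ε η A : ℝ)
    (φ : EuclideanSpace ℝ (ZMod m × ZMod m)) : ℝ :=
  h ^ 2 * ∑ p : ZMod m × ZMod m, ((ε ^ 2)⁻¹ + η / 4 + A) * φ p ^ 4 +
    (1 + η * ε ^ 2 / 2) * (h ^ 2 * ∑ p : ZMod m × ZMod m,
      (Dx m h φ p ^ 2 + Dy m h φ p ^ 2)) +
    A * (h ^ 2 * ∑ p : ZMod m × ZMod m, (Dx m h φ p ^ 2 + Dy m h φ p ^ 2) ^ 2)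

/-!
Both energies are convex, so the first-order convexity inequalities for `F_{c,h}` at `φ'` and
for `F_{e,h}` at `φ` bound the energy change by `⟪w, φ' - φ⟫ = s ⟪w, Δ_h w⟫`, where
`w = g_c(φ') - g_e(φ)`; summation by parts makes this `-s ‖∇_h w‖² / h² ≤ 0`.

Convexity is checked termwise: every summand is a nonnegative multiple of an even power of a linear
functional of `φ`, or of `(f² + g²)²` with `f, g` linear, except the coupling term
`φ² 𝔄(|𝔇φ|²)` of `H_h`. Spreading that term over the four corners of each cell (the sums are
shift invariant) writes `H_h` as `(A - 1) h² Σ (φ⁴ + |𝔇φ|⁴)` plus corner averages of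
`u⁴ + 3u²(X² + Y²) + (X² + Y²)²`, and this quartic is a positive combination of fourth powers of
linear forms.
-/

open Finset Set

section Convexity

theorem ConvexOn.fun_finset_sum {𝕜 E ι β : Type*} [Semiring 𝕜] [PartialOrder 𝕜]
    [AddCommMonoid E] [SMul 𝕜 E] [AddCommMonoid β] [PartialOrder β] [IsOrderedAddMonoid β]
    [Module 𝕜 β] {s : Set E} (hs : Convex 𝕜 s) {t : Finset ι} {f : ι → E → β}
    (hf : ∀ i ∈ t, ConvexOn 𝕜 s (f i)) : ConvexOn 𝕜 s fun x => ∑ i ∈ t, f i x := by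
  rw [← Finset.sum_fn]
  exact Finset.sum_induction f (ConvexOn 𝕜 s) (fun _ _ => ConvexOn.add) (convexOn_const 0 hs) hf

variable {E : Type*} [AddCommGroup E] [Module ℝ E]

theorem convexOn_pow_of_isLinearMap {f : E → ℝ} (hf : IsLinearMap ℝ f) {n : ℕ} (hn : Even n) :
    ConvexOn ℝ univ fun x => f x ^ n :=
  (Even.convexOn_pow (𝕜 := ℝ) hn).comp_linearMap (hf.mk' f)

theorem convexOn_sq_add_sq_sq_of_isLinearMap {f g : E → ℝ} (hf : IsLinearMap ℝ f)
    (hg : IsLinearMap ℝ g) : ConvexOn ℝ univ fun x => (f x ^ 2 + g x ^ 2) ^ 2 :=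
  ((convexOn_pow_of_isLinearMap hf even_two).add
    (convexOn_pow_of_isLinearMap hg even_two)).pow (fun x _ => by dsimp; positivity) 2

/-- The density of `H_h` once its coupling term is spread over the four cell corners. -/
def mixedQuartic (u X Y : ℝ) : ℝ :=
  u ^ 4 + 3 * u ^ 2 * (X ^ 2 + Y ^ 2) + (X ^ 2 + Y ^ 2) ^ 2

theorem mixedQuartic_eq (u X Y : ℝ) : mixedQuartic u X Y =
    ((u + X) ^ 4 + (u - X) ^ 4 + (u + Y) ^ 4 + (u - Y) ^ 4) / 4 +
      (X ^ 4 + Y ^ 4 + (X + Y) ^ 4 + (X - Y) ^ 4) / 6 := by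
  unfold mixedQuartic; ring

theorem convexOn_mixedQuartic_of_isLinearMap {f g k : E → ℝ} (hf : IsLinearMap ℝ f)
    (hg : IsLinearMap ℝ g) (hk : IsLinearMap ℝ k) :
    ConvexOn ℝ univ fun x => mixedQuartic (f x) (g x) (k x) := by
  let F := hf.mk' f
  let G := hg.mk' g
  let K := hk.mk' k
  have h4 : ∀ L : E →ₗ[ℝ] ℝ, ConvexOn ℝ univ fun x => L x ^ 4 :=
    fun L => convexOn_pow_of_isLinearMap L.isLinear (by decide)
  have := ((((h4 (F + G)).add (h4 (F - G))).add (h4 (F + K))).add (h4 (F - K))).smul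
      (by norm_num : (0 : ℝ) ≤ 1 / 4) |>.add <|
    ((((h4 G).add (h4 K)).add (h4 (G + K))).add (h4 (G - K))).smul
      (by norm_num : (0 : ℝ) ≤ 1 / 6)
  refine this.congr fun x _ => ?_
  simp only [F, G, K, mixedQuartic_eq, one_div, LinearMap.add_apply, LinearMap.sub_apply,
    IsLinearMap.mk'_apply, Pi.add_apply, smul_eq_mul]
  ring

end Convexity

section FirstOrder

variable {E : Type*}

theorem ConvexOn.add_le_of_hasFDerivAt [NormedAddCommGroup E] [NormedSpace ℝ E] {F : E → ℝ}
    {F' : E →L[ℝ] ℝ} {x : E} (hF : ConvexOn ℝ univ F) (hd : HasFDerivAt F F' x) (y : E) :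
    F x + F' (y - x) ≤ F y := by
  let q : ℝ → ℝ := F ∘ AffineMap.lineMap x y
  have hq : ConvexOn ℝ univ q := by simpa using hF.comp_affineMap (AffineMap.lineMap x y)
  have hdq : HasDerivAt q (F' (y - x)) 0 :=
    (by simpa using hd : HasFDerivAt F F' (AffineMap.lineMap x y (0 : ℝ))).comp_hasDerivAt 0
      AffineMap.hasDerivAt_lineMap
  have := hq.le_slope_of_hasDerivAt (mem_univ 0) (mem_univ 1) one_pos hdq
  simp only [q, slope_def_field, Function.comp_apply, AffineMap.lineMap_apply_zero,
    AffineMap.lineMap_apply_one, sub_zero, div_one] at this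
  linarith

theorem ConvexOn.add_inner_le_of_hasGradientAt [NormedAddCommGroup E] [InnerProductSpace ℝ E]
    [CompleteSpace E] {F : E → ℝ} {g x : E} (hF : ConvexOn ℝ univ F) (hg : HasGradientAt F g x)
    (y : E) : F x + inner ℝ g (y - x) ≤ F y := by
  simpa using hF.add_le_of_hasFDerivAt hg.hasFDerivAt y

theorem convexSplitting_sub_le [NormedAddCommGroup E] [InnerProductSpace ℝ E] [CompleteSpace E]
    {Fc Fe : E → ℝ} {gc ge x x' : E} (hc : ConvexOn ℝ univ Fc) (he : ConvexOn ℝ univ Fe)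
    (hgc : HasGradientAt Fc gc x') (hge : HasGradientAt Fe ge x) :
    Fc x' - Fe x' ≤ Fc x - Fe x + inner ℝ (gc - ge) (x' - x) := by
  have hc' := hc.add_inner_le_of_hasGradientAt hgc x
  have he' := he.add_inner_le_of_hasGradientAt hge x'
  rw [inner_sub_left]
  rw [← neg_sub x' x, inner_neg_right] at hc'
  linarith

end FirstOrder

section Grid

theorem sum_comp_add_prod {G H M : Type*} [AddGroup G] [AddGroup H] [Fintype G] [Fintype H]
    [AddCommMonoid M] (f : G × H → M) (c : G) (d : H) :
    ∑ p : G × H, f (p.1 + c, p.2 + d) = ∑ p, f p :=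
  Fintype.sum_equiv ((Equiv.addRight c).prodCongr (Equiv.addRight d)) _ _ fun _ => rfl

theorem sum_sub_comp_add_prod {G H M : Type*} [AddGroup G] [AddGroup H] [Fintype G] [Fintype H]
    [AddCommGroup M] (f : G × H → M) (c : G) (d : H) :
    ∑ p : G × H, (f (p.1 + c, p.2 + d) - f p) = 0 := by
  rw [sum_sub_distrib, sum_comp_add_prod, sub_self]

variable {m : ℕ} [NeZero m]

theorem sum_Av (ν : ZMod m × ZMod m → ℝ) : ∑ p, Av m ν p = ∑ p, ν p := by
  have h10 := sum_comp_add_prod ν (-1) 0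
  have h01 := sum_comp_add_prod ν 0 (-1)
  have h11 := sum_comp_add_prod ν (-1) (-1)
  simp only [← sub_eq_add_neg, add_zero] at h10 h01 h11
  simp only [Av, ← sum_div, sum_add_distrib, h10, h01, h11]
  ring

theorem convexOn_Av {E : Type*} [AddCommGroup E] [Module ℝ E] {s : Set E}
    {F : E → ZMod m × ZMod m → ℝ} (hF : ∀ q, ConvexOn ℝ s fun x => F x q) (p : ZMod m × ZMod m) :
    ConvexOn ℝ s fun x => Av m (F x) p :=
  (((((hF p).add (hF (p.1 - 1, p.2))).add (hF (p.1, p.2 - 1))).add (hF (p.1 - 1, p.2 - 1))).smul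
    (by norm_num : (0 : ℝ) ≤ 1 / 4)).congr fun x _ => by
      simp only [Av, Pi.add_apply, smul_eq_mul]; ring

theorem sum_mul_discreteLaplacian (h : ℝ) (v : ZMod m × ZMod m → ℝ) :
    ∑ p, v p * discreteLaplacian m h v p =
      -(∑ p, ((v (p.1 + 1, p.2) - v p) ^ 2 + (v (p.1, p.2 + 1) - v p) ^ 2)) / h ^ 2 := by
  let e₁ : ZMod m × ZMod m → ℝ := fun p => v p ^ 2 - v p * v (p.1 - 1, p.2)
  let e₂ : ZMod m × ZMod m → ℝ := fun p => v p ^ 2 - v p * v (p.1, p.2 - 1)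
  -- summation by parts: the summand differs from `-|∇v|²` by two discrete divergences
  have htel : ∀ p : ZMod m × ZMod m,
      v p * (v (p.1 + 1, p.2) + v (p.1 - 1, p.2) + v (p.1, p.2 + 1) + v (p.1, p.2 - 1) - 4 * v p)
        + ((v (p.1 + 1, p.2) - v p) ^ 2 + (v (p.1, p.2 + 1) - v p) ^ 2)
      = (e₁ (p.1 + 1, p.2 + 0) - e₁ p) + (e₂ (p.1 + 0, p.2 + 1) - e₂ p) := by
    intro p
    simp only [e₁, e₂, add_sub_cancel_right, add_zero]
    ring
  have hsum := sum_congr rfl fun p (_ : p ∈ Finset.univ) => htel p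
  simp only [sum_add_distrib] at hsum
  rw [sum_sub_comp_add_prod, sum_sub_comp_add_prod, add_zero] at hsum
  simp only [discreteLaplacian, mul_div_assoc', ← sum_div]
  congr 1
  rw [sum_add_distrib]
  linarith

theorem sum_mul_discreteLaplacian_nonpos (h : ℝ) (v : ZMod m × ZMod m → ℝ) :
    ∑ p, v p * discreteLaplacian m h v p ≤ 0 := by
  rw [sum_mul_discreteLaplacian]
  exact div_nonpos_of_nonpos_of_nonneg (neg_nonpos.2 (sum_nonneg fun _ _ => by positivity))
    (sq_nonneg h)

theorem isLinearMap_eval {ι : Type*} (p : ι) : IsLinearMap ℝ fun φ : EuclideanSpace ℝ ι => φ p :=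
  ⟨fun _ _ => rfl, fun _ _ => rfl⟩

theorem isLinearMap_Dx (h : ℝ) (p : ZMod m × ZMod m) :
    IsLinearMap ℝ fun φ : EuclideanSpace ℝ (ZMod m × ZMod m) => Dx m h φ p :=
  ⟨fun _ _ => by simp only [Dx, PiLp.add_apply]; ring,
    fun _ _ => by simp only [Dx, PiLp.smul_apply, smul_eq_mul]; ring⟩

theorem isLinearMap_Dy (h : ℝ) (p : ZMod m × ZMod m) :
    IsLinearMap ℝ fun φ : EuclideanSpace ℝ (ZMod m × ZMod m) => Dy m h φ p :=
  ⟨fun _ _ => by simp only [Dy, PiLp.add_apply]; ring,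
    fun _ _ => by simp only [Dy, PiLp.smul_apply, smul_eq_mul]; ring⟩

theorem isLinearMap_discreteLaplacian (h : ℝ) (p : ZMod m × ZMod m) :
    IsLinearMap ℝ fun φ : EuclideanSpace ℝ (ZMod m × ZMod m) => discreteLaplacian m h φ p :=
  ⟨fun _ _ => by simp only [discreteLaplacian, PiLp.add_apply]; ring,
    fun _ _ => by simp only [discreteLaplacian, PiLp.smul_apply, smul_eq_mul]; ring⟩

theorem Hh_eq (h A : ℝ) (φ : EuclideanSpace ℝ (ZMod m × ZMod m)) :
    Hh m h A φ =
      (A - 1) * (h ^ 2 * ∑ p, (φ p ^ 4 + (Dx m h φ p ^ 2 + Dy m h φ p ^ 2) ^ 2)) +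
        h ^ 2 * ∑ p, Av m (fun q => mixedQuartic (φ p) (Dx m h φ q) (Dy m h φ q)) p := by
  have hAv : ∀ p, Av m (fun q => mixedQuartic (φ p) (Dx m h φ q) (Dy m h φ q)) p =
      φ p ^ 4 + 3 * (φ p ^ 2 * Av m (fun q => Dx m h φ q ^ 2 + Dy m h φ q ^ 2) p) +
        Av m (fun q => (Dx m h φ q ^ 2 + Dy m h φ q ^ 2) ^ 2) p := by
    intro p
    simp only [Av, mixedQuartic]
    ring
  simp only [Hh, hAv, sum_add_distrib, sum_Av, ← mul_sum]
  ring

theorem convexOn_Hh (h : ℝ) {A : ℝ} (hA : 1 ≤ A) : ConvexOn ℝ univ (Hh m h A) := by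
  have hφ4 p := convexOn_pow_of_isLinearMap (isLinearMap_eval (ι := ZMod m × ZMod m) p)
    (by decide : Even 4)
  have hν2 (p : ZMod m × ZMod m) :=
    convexOn_sq_add_sq_sq_of_isLinearMap (isLinearMap_Dx h p) (isLinearMap_Dy h p)
  have hmix (p q : ZMod m × ZMod m) := convexOn_mixedQuartic_of_isLinearMap
    (isLinearMap_eval (ι := ZMod m × ZMod m) p) (isLinearMap_Dx h q) (isLinearMap_Dy h q)
  refine ConvexOn.congr ?_ fun φ _ => (Hh_eq h A φ).symm
  exact ((((ConvexOn.fun_finset_sum convex_univ fun p _ => (hφ4 p).add (hν2 p)).smul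
      (sq_nonneg h)).smul (sub_nonneg.2 hA)).add
    ((ConvexOn.fun_finset_sum convex_univ fun p _ => convexOn_Av (hmix p) p).smul (sq_nonneg h)))

end Grid

section Energy

variable {m : ℕ} [NeZero m]

theorem convexOn_Fch (h ε : ℝ) {η A : ℝ} (hη : 0 ≤ η) (hA : 1 ≤ A) :
    ConvexOn ℝ univ (Fch m h ε η A) := by
  have hpow (p : ZMod m × ZMod m) {n : ℕ} (hn : Even n) :=
    convexOn_pow_of_isLinearMap (isLinearMap_eval (ι := ZMod m × ZMod m) p) hn
  have hΔ (p : ZMod m × ZMod m) :=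
    convexOn_pow_of_isLinearMap (isLinearMap_discreteLaplacian h p) even_two
  exact ((ConvexOn.fun_finset_sum convex_univ fun p _ =>
      (((hpow p (by decide : Even 6)).smul (by positivity)).add
        ((hpow p even_two).smul (by positivity))).add ((hΔ p).smul (by positivity))).smul
    (sq_nonneg h)).add (convexOn_Hh h hA)

theorem convexOn_Feh (h ε : ℝ) {η A : ℝ} (hη : 0 ≤ η) (hA : 0 ≤ A) :
    ConvexOn ℝ univ (Feh m h ε η A) := by
  have hφ4 (p : ZMod m × ZMod m) :=
    convexOn_pow_of_isLinearMap (isLinearMap_eval (ι := ZMod m × ZMod m) p) (by decide : Even 4)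
  have hν (p : ZMod m × ZMod m) := (convexOn_pow_of_isLinearMap (isLinearMap_Dx h p) even_two).add
    (convexOn_pow_of_isLinearMap (isLinearMap_Dy h p) even_two)
  have hν2 (p : ZMod m × ZMod m) :=
    convexOn_sq_add_sq_sq_of_isLinearMap (isLinearMap_Dx h p) (isLinearMap_Dy h p)
  exact (((ConvexOn.fun_finset_sum convex_univ fun p _ => (hφ4 p).smul (by positivity)).smul
      (sq_nonneg h)).add
    (((ConvexOn.fun_finset_sum convex_univ fun p _ => hν p).smul (sq_nonneg h)).smul
      (by positivity))).add
    (((ConvexOn.fun_finset_sum convex_univ fun p _ => hν2 p).smul (sq_nonneg h)).smul hA)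

end Energy

theorem fully_discrete_scheme_energy_stability_general (m : ℕ) [NeZero m]
    (h ε η A s : ℝ) (hη : 0 ≤ η) (hA : 1 ≤ A) (hs : 0 ≤ s)
    (gc ge : EuclideanSpace ℝ (ZMod m × ZMod m) → EuclideanSpace ℝ (ZMod m × ZMod m))
    (hgc : ∀ φ, HasGradientAt (Fch m h ε η A) (gc φ) φ)
    (hge : ∀ φ, HasGradientAt (Feh m h ε η A) (ge φ) φ)
    (φ φ' : EuclideanSpace ℝ (ZMod m × ZMod m))
    (hstep : φ' - φ =
      s • (WithLp.toLp 2 (discreteLaplacian m h (gc φ' - ge φ)) : EuclideanSpace ℝ (ZMod m × ZMod m))) :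
    Fch m h ε η A φ' - Feh m h ε η A φ' ≤ Fch m h ε η A φ - Feh m h ε η A φ := by
  have hsplit := convexSplitting_sub_le (convexOn_Fch h ε hη hA)
    (convexOn_Feh h ε hη (zero_le_one.trans hA)) (hgc φ') (hge φ)
  have hdissipation : inner ℝ (gc φ' - ge φ) (φ' - φ) ≤ 0 := by
    rw [hstep, real_inner_smul_right]
    refine mul_nonpos_of_nonneg_of_nonpos hs ?_
    simpa [PiLp.inner_apply, mul_comm] using
      sum_mul_discreteLaplacian_nonpos h (gc φ' - ge φ : EuclideanSpace ℝ (ZMod m × ZMod m))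
  linarith

theorem fully_discrete_scheme_energy_stability (m : ℕ) [NeZero m] (hm : 2 ≤ m)
    (h ε η A s : ℝ) (hh : 0 < h) (hε : 0 < ε) (hη : 0 ≤ η) (hA : 1 ≤ A) (hs : 0 ≤ s)
    (gc ge : EuclideanSpace ℝ (ZMod m × ZMod m) → EuclideanSpace ℝ (ZMod m × ZMod m))
    (hgc : ∀ φ, HasGradientAt (Fch m h ε η A) (gc φ) φ)
    (hge : ∀ φ, HasGradientAt (Feh m h ε η A) (ge φ) φ)
    (φ φ' : EuclideanSpace ℝ (ZMod m × ZMod m))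
    (hstep : φ' - φ =
      s • (WithLp.toLp 2 (discreteLaplacian m h (gc φ' - ge φ)) : EuclideanSpace ℝ (ZMod m × ZMod m))) :
    Fch m h ε η A φ' - Feh m h ε η A φ' ≤ Fch m h ε η A φ - Feh m h ε η A φ :=
  fully_discrete_scheme_energy_stability_general m h ε η A s hη hA hs gc ge hgc hge φ φ' hstep
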